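/- The dirty-paper identity for the degraded AWGN broadcast channel: with V = sqrt((1-α)P)Q2, U = sqrt(αP)Q1 + (αP/(αP+σ²))V, X = sqrt(αP)Q1 + sqrt((1-α)P)Q2, Y = X+N1, Z = X+N2, where Q1,Q2 are independent standard Gaussians and N1,N2 ~ N(0,σ²) independent of (Q1,Q2), we have I(V;Z) + I(U;Y) - I(U;V) = (1/2) log2(1 + P/σ²). -/
import Mathlib


open scoped RealInnerProductSpace

/-- Mutual information (in bits) between two jointly Gaussian scalar random variables,
modeled as vectors in a real inner product space where the inner product is the
covariance:  `I(u;v) = (1/2) log2( Var u · Var v / (Var u · Var v - Cov(u,v)²) )`. -/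
noncomputable def gaussMI {E : Type*} [NormedAddCommGroup E] [InnerProductSpace ℝ E]
    (u v : E) : ℝ :=
  (1 / 2) * Real.logb 2
    ((⟪u, u⟫ * ⟪v, v⟫) / (⟪u, u⟫ * ⟪v, v⟫ - ⟪u, v⟫ ^ 2))

lemma logb_combine (x1 x2 x3 y : ℝ) (h1 : 0 < x1) (h2 : 0 < x2) (h3 : 0 < x3)
    (h : x1 * x2 = y * x3) :
    1 / 2 * Real.logb 2 x1 + 1 / 2 * Real.logb 2 x2 - 1 / 2 * Real.logb 2 x3
      = 1 / 2 * Real.logb 2 y := by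
  have hy : 0 < y := by
    have hp := mul_pos h1 h2
    rw [h] at hp
    nlinarith
  have : Real.logb 2 x1 + Real.logb 2 x2 = Real.logb 2 y + Real.logb 2 x3 := by
    rw [← Real.logb_mul h1.ne' h2.ne', ← Real.logb_mul hy.ne' h3.ne', h]
  linarith

/-- the dirty-paper identity for the degraded AWGN broadcast channel:
`I(V;Z) + I(U;Y) - I(U;V) = (1/2) log2(1 + P/σ²)`. -/
theorem dirty_paper_identity {E : Type*} [NormedAddCommGroup E] [InnerProductSpace ℝ E]
    (Q1 Q2 N1 N2 : E) (hQ1 : ⟪Q1, Q1⟫ = 1) (hQ2 : ⟪Q2, Q2⟫ = 1) (hQ12 : ⟪Q1, Q2⟫ = 0)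
    (σ2 : ℝ) (hσ2 : 0 < σ2) (hN1 : ⟪N1, N1⟫ = σ2) (hN2 : ⟪N2, N2⟫ = σ2)
    (hN1Q1 : ⟪Q1, N1⟫ = 0) (hN1Q2 : ⟪Q2, N1⟫ = 0)
    (hN2Q1 : ⟪Q1, N2⟫ = 0) (hN2Q2 : ⟪Q2, N2⟫ = 0)
    (α P : ℝ) (hα : α ∈ Set.Ioo (0 : ℝ) 1) (hP : 0 < P) :
    gaussMI (Real.sqrt ((1 - α) * P) • Q2)
        ((Real.sqrt (α * P) • Q1 + Real.sqrt ((1 - α) * P) • Q2) + N2)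
      + gaussMI
          (Real.sqrt (α * P) • Q1
            + (α * P / (α * P + σ2)) • (Real.sqrt ((1 - α) * P) • Q2))
          ((Real.sqrt (α * P) • Q1 + Real.sqrt ((1 - α) * P) • Q2) + N1)
      - gaussMI
          (Real.sqrt (α * P) • Q1
            + (α * P / (α * P + σ2)) • (Real.sqrt ((1 - α) * P) • Q2))
          (Real.sqrt ((1 - α) * P) • Q2)
      = (1 / 2) * Real.logb 2 (1 + P / σ2) := by
  obtain ⟨hα0, hα1⟩ := hα
  have ha : 0 < α * P := by positivity
  have hb : 0 < (1 - α) * P := by nlinarith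
  set a := α * P with ha'
  set b := (1 - α) * P with hb'
  set s := σ2 with hs'
  have hA : Real.sqrt a * Real.sqrt a = a := Real.mul_self_sqrt ha.le
  have hB : Real.sqrt b * Real.sqrt b = b := Real.mul_self_sqrt hb.le
  have h1 : ⟪N1, Q1⟫ = 0 := by rw [real_inner_comm]; exact hN1Q1
  have h2 : ⟪N1, Q2⟫ = 0 := by rw [real_inner_comm]; exact hN1Q2
  have h3 : ⟪N2, Q1⟫ = 0 := by rw [real_inner_comm]; exact hN2Q1
  have h4 : ⟪N2, Q2⟫ = 0 := by rw [real_inner_comm]; exact hN2Q2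
  have h5 : ⟪Q2, Q1⟫ = 0 := by rw [real_inner_comm]; exact hQ12
  set c := a / (a + s) with hc'
  have hsq2 : Real.sqrt b * (c * Real.sqrt b) = c * b := by
    rw [mul_left_comm, hB]
  simp only [gaussMI, inner_add_left, inner_add_right, real_inner_smul_left,
    real_inner_smul_right, hQ1, hQ2, hQ12, hN1, hN2, hN1Q1, hN1Q2, hN2Q1, hN2Q2,
    h1, h2, h3, h4, h5, mul_zero, mul_one, zero_add, add_zero, zero_mul,
    hA, hB, hsq2]
  have has : 0 < a + s := by positivity
  have hc0 : 0 < c := div_pos ha has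
  have he : 0 < a + c * (c * b) := by positivity
  have habs : 0 < a + b + s := by positivity
  have hab : a + b = P := by rw [ha', hb']; ring
  have hd1 : b * (a + b + s) - b ^ 2 = b * (a + s) := by ring
  have hd2 : (a + c * (c * b)) * (a + b + s) - (a + c * b) ^ 2
      = a * s * (a + b + s) / (a + s) := by
    rw [hc']; field_simp; ring
  have hd3 : (a + c * (c * b)) * b - (c * b) ^ 2 = a * b := by ring
  apply logb_combine
  · rw [hd1]; positivity
  · rw [hd2]; positivity
  · rw [hd3]; positivity
  · rw [hd1, hd2, hd3, hc', ← hab]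
    field_simp
    ring
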